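/- arXiv:1106.2885 — 3 statements merged into one kernel-verified Lean document; each statement's English description precedes it below -/
import Mathlib

section
/- Let p be a prime, and let n ≥ 1 and m ≥ 1 be integers. Then the number of invertible n×n matrices over ℤ/p^mℤ is Nat.card GLₙ(ℤ/p^mℤ) = p^{(m−1)n²} · ∏_{i=0}^{n−1} (pⁿ − pⁱ). -/
lemma isUnit_cast_iff {p m : ℕ} (hp : p.Prime) (hm : 1 ≤ m) (x : ZMod (p ^ m)) :
    IsUnit (ZMod.castHom (dvd_pow_self p (by omega : m ≠ 0)) (ZMod p) x) ↔ IsUnit x := by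
  have : NeZero (p ^ m) := ⟨pow_ne_zero m hp.pos.ne'⟩
  have hx : x = ((x.val : ℕ) : ZMod (p ^ m)) := (ZMod.natCast_zmod_val x).symm
  rw [ZMod.castHom_apply, ← ZMod.natCast_val]
  rw [ZMod.isUnit_iff_coprime, hx, ZMod.isUnit_iff_coprime,
    Nat.coprime_pow_right_iff (by omega)]
  rw [← hx]

/-- The number of invertible `n × n` matrices over `ℤ/p^mℤ` is
`p^((m-1)n²) * ∏_{i=0}^{n-1} (pⁿ - pⁱ)`. -/
theorem card_GL_zmod_pow (p n m : ℕ) (hp : p.Prime) (hn : 1 ≤ n) (hm : 1 ≤ m) :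
    Nat.card (Matrix.GeneralLinearGroup (Fin n) (ZMod (p ^ m))) =
      p ^ ((m - 1) * n ^ 2) * ∏ i ∈ Finset.range n, (p ^ n - p ^ i) := by
  have : Fact p.Prime := ⟨hp⟩
  have : NeZero (p ^ m) := ⟨pow_ne_zero m hp.pos.ne'⟩
  set R := ZMod (p ^ m) with hR
  set k := ZMod p with hk
  let f : R →+* k := ZMod.castHom (dvd_pow_self p (by omega : m ≠ 0)) k
  let F : Matrix (Fin n) (Fin n) R →+* Matrix (Fin n) (Fin n) k := f.mapMatrix
  have hf : Function.Surjective f := ZMod.ringHom_surjective f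
  have hF : Function.Surjective F := fun B =>
    ⟨Matrix.of fun i j => (hf (B i j)).choose, by
      ext i j
      exact (hf (B i j)).choose_spec⟩
  have hunit : ∀ A : Matrix (Fin n) (Fin n) R, IsUnit (F A) ↔ IsUnit A := by
    intro A
    rw [Matrix.isUnit_iff_isUnit_det, Matrix.isUnit_iff_isUnit_det]
    show IsUnit (f.mapMatrix A).det ↔ _
    rw [← RingHom.map_det]
    exact isUnit_cast_iff hp hm _
  have hu1 : ∀ A : Matrix (Fin n) (Fin n) R, F A = 1 → IsUnit A := fun A hA =>
    (hunit A).mp (by rw [hA]; exact isUnit_one)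
  let φ : GL (Fin n) R →* GL (Fin n) k := Units.map F.toMonoidHom
  have hφ : Function.Surjective φ := by
    intro B
    obtain ⟨A, hA⟩ := hF B.val
    have hu : IsUnit A := (hunit A).mp (by rw [hA]; exact B.isUnit)
    refine ⟨hu.unit, Units.ext ?_⟩
    simpa [φ, hu.unit_spec] using hA
  -- card splits
  have h1 : Nat.card (GL (Fin n) R) = Nat.card (GL (Fin n) k) * Nat.card φ.ker := by
    rw [← Nat.card_congr (QuotientGroup.quotientKerEquivOfSurjective φ hφ).toEquiv]
    exact Subgroup.card_eq_card_quotient_mul_card_subgroup φ.ker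
  -- kernel of φ ≃ additive kernel of F
  have e1 : φ.ker ≃ {A : Matrix (Fin n) (Fin n) R // F A = 1} :=
    { toFun := fun u => ⟨u.val.val, congrArg Units.val (MonoidHom.mem_ker.mp u.2)⟩
      invFun := fun A => ⟨(hu1 A.1 A.2).unit, MonoidHom.mem_ker.mpr (Units.ext (by
        show F _ = 1
        rw [(hu1 A.1 A.2).unit_spec, A.2]))⟩
      left_inv := fun u => Subtype.ext (Units.ext
        ((hu1 u.val.val (congrArg Units.val (MonoidHom.mem_ker.mp u.2))).unit_spec))
      right_inv := fun A => Subtype.ext ((hu1 A.1 A.2).unit_spec) }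
  have e2 : {A : Matrix (Fin n) (Fin n) R // F A = 1} ≃ F.toAddMonoidHom.ker :=
    (Equiv.subtypeEquiv (Equiv.subRight (1 : Matrix (Fin n) (Fin n) R)) (by
      intro A
      simp only [Equiv.subRight_apply]
      rw [AddMonoidHom.mem_ker]
      show _ ↔ F (A - 1) = 0
      rw [map_sub, map_one, sub_eq_zero]))
  have hker : Nat.card φ.ker = Nat.card F.toAddMonoidHom.ker :=
    Nat.card_congr (e1.trans e2)
  -- count the additive kernel
  have ematR : Matrix (Fin n) (Fin n) R ≃ (Fin n → Fin n → R) := Equiv.refl _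
  have ematk : Matrix (Fin n) (Fin n) k ≃ (Fin n → Fin n → k) := Equiv.refl _
  have hcardR : Nat.card (Matrix (Fin n) (Fin n) R) = p ^ (m * n ^ 2) := by
    rw [Nat.card_congr ematR, Nat.card_fun, Nat.card_fun, Nat.card_eq_fintype_card (α := Fin n),
      Fintype.card_fin, hR, Nat.card_zmod, ← pow_mul, ← pow_mul]
    ring_nf
  have hcardk : Nat.card (Matrix (Fin n) (Fin n) k) = p ^ (n ^ 2) := by
    rw [Nat.card_congr ematk, Nat.card_fun, Nat.card_fun, Nat.card_eq_fintype_card (α := Fin n),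
      Fintype.card_fin, hk, Nat.card_zmod, ← pow_mul]
    ring_nf
  have h2 : Nat.card (Matrix (Fin n) (Fin n) R)
      = Nat.card (Matrix (Fin n) (Fin n) k) * Nat.card F.toAddMonoidHom.ker := by
    rw [← Nat.card_congr
      (QuotientAddGroup.quotientKerEquivOfSurjective F.toAddMonoidHom hF).toEquiv]
    exact AddSubgroup.card_eq_card_quotient_mul_card_addSubgroup F.toAddMonoidHom.ker
  have hkercard : Nat.card F.toAddMonoidHom.ker = p ^ ((m - 1) * n ^ 2) := by
    have hp2 : 0 < p ^ (n ^ 2) := pow_pos hp.pos _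
    rw [hcardR, hcardk] at h2
    have key : p ^ (m * n ^ 2) = p ^ (n ^ 2) * p ^ ((m - 1) * n ^ 2) := by
      rw [← pow_add]
      congr 1
      have hm1 : m = 1 + (m - 1) := by omega
      nlinarith [hm1]
    rw [key] at h2
    exact (Nat.eq_of_mul_eq_mul_left hp2 h2.symm)
  -- GL over the field
  have hGLk : Nat.card (GL (Fin n) k) = ∏ i ∈ Finset.range n, (p ^ n - p ^ i) := by
    rw [Matrix.card_GL_field, ZMod.card]
    exact Fin.prod_univ_eq_prod_range (fun i => p ^ n - p ^ i) n
  rw [h1, hker, hkercard, hGLk]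
  ring
end

section
/- Let G be a compact Hausdorff topological group with Haar probability measure μ, and let N be an open normal subgroup of G. Then N has finite index in G, and the product measure μ × μ of the set {(x,y) ∈ G × G : x·y·x⁻¹·y⁻¹ ∈ N} equals cc(G/N) / [G : N], where cc(G/N) is the number of conjugacy classes of the finite quotient group G/N. -/
/-!
The cosets of `N` are translates of `N`, so each has Haar measure `1/[G:N]`. The pairs whose
commutator lies in `N` are the preimage of the commuting pairs of `G/N`, hence their measure is
the number of commuting pairs of `G/N` times `1/[G:N]²`; in a finite group `H` there are
`cc(H)·|H|` commuting pairs.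
-/

open MeasureTheory Measure

theorem measure_preimage_eq_encard_mul {α β : Type*} [MeasurableSpace α] [Countable β]
    {μ : Measure α} {f : α → β} (hf : ∀ y, MeasurableSet (f ⁻¹' {y})) {c : ENNReal}
    (hc : ∀ y, μ (f ⁻¹' {y}) = c) (s : Set β) : μ (f ⁻¹' s) = s.encard * c := by
  rw [← tsum_measure_preimage_singleton s.to_countable fun y _ ↦ hf y]
  simp only [hc, ENNReal.tsum_set_const]

theorem QuotientGroup.preimage_mk_singleton_mk {G : Type*} [Group G] (N : Subgroup G) (g : G) :
    ((↑) : G → G ⧸ N) ⁻¹' {(g : G ⧸ N)} = (g⁻¹ * ·) ⁻¹' N := by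
  ext x
  exact eq_comm.trans QuotientGroup.eq

theorem QuotientGroup.commute_mk_iff {G : Type*} [Group G] (N : Subgroup G) [N.Normal] (x y : G) :
    Commute (x : G ⧸ N) (y : G ⧸ N) ↔ x * y * x⁻¹ * y⁻¹ ∈ N := by
  rw [← commutatorElement_eq_one_iff_commute, commutatorElement_def, ← QuotientGroup.eq_one_iff]
  rfl

namespace Subgroup

variable {G : Type*} [Group G] [MeasurableSpace G] [MeasurableMul G] {N : Subgroup G}
  (μ : Measure G) [IsMulLeftInvariant μ]

theorem measurableSet_preimage_mk_singleton (hN : MeasurableSet (N : Set G)) (q : G ⧸ N) :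
    MeasurableSet (((↑) : G → G ⧸ N) ⁻¹' {q}) := by
  induction q using QuotientGroup.induction_on with
  | H g => rw [QuotientGroup.preimage_mk_singleton_mk]; exact hN.preimage (measurable_const_mul _)

theorem measure_preimage_mk_singleton (q : G ⧸ N) :
    μ (((↑) : G → G ⧸ N) ⁻¹' {q}) = μ N := by
  induction q using QuotientGroup.induction_on with
  | H g => rw [QuotientGroup.preimage_mk_singleton_mk]; exact measure_preimage_mul μ _ _

theorem measure_eq_inv_index [IsProbabilityMeasure μ] [N.FiniteIndex]
    (hN : MeasurableSet (N : Set G)) : μ N = (N.index : ENNReal)⁻¹ :=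
  ENNReal.eq_inv_of_mul_eq_one_left <| by rw [mul_comm, N.index_mul_measure hN μ, measure_univ]

theorem measure_prod_preimage_prodMap_mk [IsProbabilityMeasure μ] [N.FiniteIndex]
    (hN : MeasurableSet (N : Set G)) (s : Set ((G ⧸ N) × (G ⧸ N))) :
    (μ.prod μ) (Prod.map (↑) (↑) ⁻¹' s) = s.encard * (N.index : ENNReal)⁻¹ ^ 2 := by
  have : Finite (G ⧸ N) := finite_quotient_of_finiteIndex
  refine measure_preimage_eq_encard_mul (fun q ↦ ?_) (fun q ↦ ?_) s <;>
    rw [← Set.singleton_prod_singleton, Set.preimage_prod_map_prod]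
  · exact (measurableSet_preimage_mk_singleton hN _).prod
      (measurableSet_preimage_mk_singleton hN _)
  · rw [Measure.prod_prod, measure_preimage_mk_singleton, measure_preimage_mk_singleton,
      measure_eq_inv_index μ hN, sq]

end Subgroup

theorem haar_measure_commuting_pairs_general (G : Type*) [Group G] [TopologicalSpace G]
    [IsTopologicalGroup G] [CompactSpace G] [MeasurableSpace G] [BorelSpace G]
    (μ : Measure G) [μ.IsHaarMeasure] [IsProbabilityMeasure μ]
    (N : Subgroup G) [N.Normal] (hN : IsOpen (N : Set G)) :
    N.FiniteIndex ∧
      (μ.prod μ) {q : G × G | q.1 * q.2 * q.1⁻¹ * q.2⁻¹ ∈ N} =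
        (Nat.card (ConjClasses (G ⧸ N)) : ENNReal) / (N.index : ENNReal) := by
  have : Finite (G ⧸ N) := N.quotient_finite_of_isOpen hN
  have hfin : N.FiniteIndex := N.finiteIndex_of_finite_quotient
  refine ⟨hfin, ?_⟩
  have hcomm : {q : G × G | q.1 * q.2 * q.1⁻¹ * q.2⁻¹ ∈ N} =
      Prod.map (↑) (↑) ⁻¹' {p : (G ⧸ N) × (G ⧸ N) | Commute p.1 p.2} := by
    ext q
    exact (QuotientGroup.commute_mk_iff N q.1 q.2).symm
  have hcard : {p : (G ⧸ N) × (G ⧸ N) | Commute p.1 p.2}.encard =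
      Nat.card (ConjClasses (G ⧸ N)) * N.index := by
    rw [← ENat.card_coe_set_eq, ENat.card_eq_coe_natCard]
    exact_mod_cast card_comm_eq_card_conjClasses_mul_card (G ⧸ N)
  have hi : (N.index : ENNReal) ≠ 0 := by exact_mod_cast hfin.index_ne_zero
  rw [hcomm, Subgroup.measure_prod_preimage_prodMap_mk μ hN.measurableSet, hcard]
  push_cast
  rw [sq, mul_assoc, ← mul_assoc (N.index : ENNReal), ENNReal.mul_inv_cancel hi
    (ENNReal.natCast_ne_top _), one_mul, div_eq_mul_inv]

/-- For a compact group `G` with Haar probability measure `μ` and an open normal subgroup `N`,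
`N` has finite index and `(μ×μ){(x,y) : [x,y] ∈ N} = cc(G/N) / [G:N]`. -/
theorem haar_measure_commuting_pairs (G : Type*) [Group G] [TopologicalSpace G]
    [IsTopologicalGroup G] [CompactSpace G] [T2Space G] [MeasurableSpace G] [BorelSpace G]
    (μ : Measure G) [μ.IsHaarMeasure] [IsProbabilityMeasure μ]
    (N : Subgroup G) [N.Normal] (hN : IsOpen (N : Set G)) :
    N.FiniteIndex ∧
      (μ.prod μ) {q : G × G | q.1 * q.2 * q.1⁻¹ * q.2⁻¹ ∈ N} =
        (Nat.card (ConjClasses (G ⧸ N)) : ENNReal) / (N.index : ENNReal) :=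
  haar_measure_commuting_pairs_general G μ N hN
end

section
/- Let p be a prime, n ≥ 1, and set d = n². Let μ be the Haar probability measure on the compact group GLₙ(ℤ_p). For each integer m ≥ 0 let c_m = cc(GLₙ(ℤ/p^mℤ)) be the number of conjugacy classes of GLₙ(ℤ/p^mℤ), and for real σ > 0 define Z(σ) = ∫_{GLₙ(ℤ_p) × GLₙ(ℤ_p)} ( max_{1≤i,j≤n} ‖(xy − yx)_{ij}‖_p )^σ d(μ×μ)(x,y), where the convention 0^σ = 0 is used. Then for every real s > d the series ∑_{m=0}^∞ c_m p^{−ms} converges and ∑_{m=0}^∞ c_m p^{−ms} − 1 = k·(Z(s−d) − 1)/(1 − p^{s−d}), where k = |GLₙ(𝔽_p)| / p^d. -/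
/-!
Reduction modulo `p^m` pushes the Haar measure of `GLₙ(ℤ_p)` forward to the uniform measure on
`GLₙ(ℤ/p^m)`. Hence the set `S_m` of pairs whose commutator has all entries of norm `≤ p^{-m}`,
i.e. which commute modulo `p^m`, has measure `#{commuting pairs}/|GLₙ(ℤ/p^m)|² = c_m/|GLₙ(ℤ/p^m)|`,
where `|GLₙ(ℤ/p^m)| = |GLₙ(𝔽_p)| p^{(m-1)d}` because the kernel of reduction to `𝔽_p` is
`1 + p Mₙ(ℤ/p^m)`. The sup-norm of the commutator only takes the values `0` and `p^{-m}`, so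
`Z(σ) = ∑ p^{-mσ} (μ(S_m) - μ(S_{m+1}))`, and summation by parts turns this into the series
`∑ c_m p^{-ms}`.
-/

open MeasureTheory

noncomputable instance (p : ℕ) [Fact p.Prime] : MeasurableSpace (PadicInt p) := borel _
instance (p : ℕ) [Fact p.Prime] : BorelSpace (PadicInt p) := ⟨rfl⟩

instance {l m α : Type*} [MeasurableSpace α] : MeasurableSpace (Matrix l m α) :=
  (inferInstance : MeasurableSpace (l → m → α))

open Function

namespace Matrix.GeneralLinearGroup

variable {ι R S : Type*} [Fintype ι] [DecidableEq ι] [CommRing R] [CommRing S] {f : R →+* S}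

theorem mem_ker_map_iff {u : GL ι R} :
    u ∈ (map f).ker ↔ ((u : Matrix ι ι R) - 1).map f = 0 := by
  rw [MonoidHom.mem_ker, Units.ext_iff, Matrix.map_sub _ (map_sub f),
    Matrix.map_one f (map_zero f) (map_one f), sub_eq_zero]
  rfl

variable [IsLocalHom f]

theorem map_surjective (hf : Surjective f) : Surjective (map (n := ι) f) := by
  intro g
  let A : Matrix ι ι R := .of fun i j => surjInv hf (g i j)
  have hA : A.map f = g := by ext; simp [A, surjInv_eq]
  have hdet : IsUnit A.det := IsUnit.of_map f _ <| by
    rw [RingHom.map_det, RingHom.mapMatrix_apply, hA]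
    exact (Matrix.isUnit_iff_isUnit_det _).mp g.isUnit
  exact ⟨.mk'' A hdet, Units.ext hA⟩

noncomputable def kerMapEquiv : (map (n := ι) f).ker ≃ (ι → ι → RingHom.ker f) where
  toFun u i j := ⟨((u : GL ι R) - 1 : Matrix ι ι R) i j, congrFun₂ (mem_ker_map_iff.mp u.2) i j⟩
  invFun B :=
    have hB : (.of fun i j => (B i j : R) : Matrix ι ι R).map f = 0 := by
      ext i j; exact (B i j).2
    have hdet : IsUnit (1 + .of fun i j => (B i j : R) : Matrix ι ι R).det :=
      IsUnit.of_map f _ <| by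
        rw [RingHom.map_det, RingHom.mapMatrix_apply, Matrix.map_add _ (map_add f),
          Matrix.map_one f (map_zero f) (map_one f), hB, add_zero, det_one]
        exact isUnit_one
    ⟨.mk'' _ hdet, mem_ker_map_iff.mpr (by simpa using hB)⟩
  left_inv u := by ext; simp
  right_inv B := by ext; simp

theorem card_eq_card_mul_card_ker_pow (hf : Surjective f) :
    Nat.card (GL ι R) = Nat.card (GL ι S) * Nat.card (RingHom.ker f) ^ (Fintype.card ι ^ 2) := by
  rw [← (map (n := ι) f).ker.card_mul_index, Subgroup.index_ker,
    MonoidHom.range_eq_top.mpr (map_surjective hf), Subgroup.card_top, mul_comm,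
    Nat.card_congr kerMapEquiv, Nat.card_fun, Nat.card_fun, Nat.card_eq_fintype_card (α := ι),
    ← pow_mul, sq]

end Matrix.GeneralLinearGroup

theorem ZMod.nontrivial_prime_pow {p : ℕ} [Fact p.Prime] {m : ℕ} (hm : m ≠ 0) :
    Nontrivial (ZMod (p ^ m)) :=
  ZMod.nontrivial_iff.mpr (Nat.one_lt_pow hm (Fact.out : p.Prime).one_lt).ne'

namespace PadicInt

variable {p : ℕ} [Fact p.Prime]

theorem toZModPow_surjective (m : ℕ) : Surjective (toZModPow (p := p) m) := by
  have : NeZero (p ^ m) := ⟨pow_ne_zero _ (Fact.out : p.Prime).ne_zero⟩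
  exact fun y => ⟨(y.val : ℤ_[p]), by rw [map_natCast, ZMod.natCast_zmod_val]⟩

theorem norm_le_pow_iff_toZModPow_eq_zero {m : ℕ} {x : ℤ_[p]} :
    ‖x‖ ≤ (p : ℝ) ^ (-(m : ℤ)) ↔ toZModPow m x = 0 := by
  rw [norm_le_pow_iff_mem_span_pow, ← ker_toZModPow, RingHom.mem_ker]

theorem toZModPow_preimage_singleton (m : ℕ) (x : ℤ_[p]) :
    toZModPow m ⁻¹' {toZModPow m x} = Metric.closedBall x ((p : ℝ) ^ (-(m : ℤ))) := by
  ext y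
  rw [Set.mem_preimage, Set.mem_singleton_iff, Metric.mem_closedBall, dist_eq_norm,
    norm_le_pow_iff_toZModPow_eq_zero, map_sub, sub_eq_zero]

theorem measurableSet_toZModPow_preimage_singleton (m : ℕ) (b : ZMod (p ^ m)) :
    MeasurableSet (toZModPow m ⁻¹' {b}) := by
  obtain ⟨x, rfl⟩ := toZModPow_surjective m b
  rw [toZModPow_preimage_singleton]
  exact Metric.isClosed_closedBall.measurableSet

theorem isLocalHom_toZModPow {m : ℕ} (hm : m ≠ 0) : IsLocalHom (toZModPow (p := p) m) :=
  have := ZMod.nontrivial_prime_pow (p := p) hm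
  .of_surjective _ (toZModPow_surjective m)

end PadicInt

-- `ZMod (p ^ m)` is a local ring, being a quotient of the local ring `ℤ_[p]`.
theorem ZMod.isLocalHom_castHom_pow {p : ℕ} [Fact p.Prime] {m : ℕ} (hm : m ≠ 0) :
    IsLocalHom (ZMod.castHom (dvd_pow_self p hm) (ZMod p)) :=
  have := PadicInt.isLocalHom_toZModPow (p := p) hm
  have := ZMod.nontrivial_prime_pow (p := p) hm
  have : IsLocalRing (ZMod (p ^ m)) := .of_surjective _ (PadicInt.toZModPow_surjective m)
  .of_surjective _ (ZMod.castHom_surjective _)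

theorem ZMod.card_ker_castHom_pow {p : ℕ} [Fact p.Prime] {m : ℕ} (hm : m ≠ 0) :
    Nat.card (RingHom.ker (ZMod.castHom (dvd_pow_self p hm) (ZMod p))) = p ^ (m - 1) := by
  have h := (ZMod.castHom (dvd_pow_self p hm) (ZMod p)).toAddMonoidHom.ker.card_mul_index
  rw [AddSubgroup.index_ker,
    AddMonoidHom.range_eq_top.mpr (ZMod.castHom_surjective (dvd_pow_self p hm)),
    AddSubgroup.card_top, Nat.card_zmod, Nat.card_zmod] at h
  refine Nat.eq_of_mul_eq_mul_right (Fact.out : p.Prime).pos ?_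
  rw [pow_sub_one_mul hm]
  exact h

theorem Matrix.GeneralLinearGroup.card_zmod_prime_pow_succ (ι : Type*) [Fintype ι] [DecidableEq ι]
    (p m : ℕ) [Fact p.Prime] :
    Nat.card (GL ι (ZMod (p ^ (m + 1)))) =
      Nat.card (GL ι (ZMod p)) * p ^ (m * Fintype.card ι ^ 2) := by
  have := ZMod.isLocalHom_castHom_pow (p := p) m.succ_ne_zero
  rw [card_eq_card_mul_card_ker_pow (ZMod.castHom_surjective (dvd_pow_self p m.succ_ne_zero)),
    ZMod.card_ker_castHom_pow m.succ_ne_zero, Nat.succ_sub_one, ← pow_mul]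

theorem Matrix.measurable_apply {ι κ R : Type*} [MeasurableSpace R] (i : ι) (j : κ) :
    Measurable fun A : Matrix ι κ R => A i j :=
  (measurable_pi_apply j).comp (measurable_pi_apply i)

instance Matrix.measurableMul {ι R : Type*} [Fintype ι] [MeasurableSpace R]
    [NonUnitalNonAssocSemiring R] [MeasurableMul R] [MeasurableAdd₂ R] :
    MeasurableMul (Matrix ι ι R) where
  measurable_const_mul _ := measurable_pi_lambda _ fun _ => measurable_pi_lambda _ fun j =>
    Finset.measurable_sum _ fun k _ => (Matrix.measurable_apply k j).const_mul _
  measurable_mul_const _ := measurable_pi_lambda _ fun i => measurable_pi_lambda _ fun _ =>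
    Finset.measurable_sum _ fun k _ => (Matrix.measurable_apply i k).mul_const _

instance Units.measurableMul {M : Type*} [Monoid M] [MeasurableSpace M] [MeasurableMul M] :
    MeasurableMul Mˣ where
  measurable_const_mul g := measurable_comap_iff.mpr <|
    (measurable_const_mul (g : M)).comp (comap_measurable _)
  measurable_mul_const g := measurable_comap_iff.mpr <|
    (measurable_mul_const (g : M)).comp (comap_measurable _)

namespace MonoidHom

variable {G H : Type*} [Group G] [MeasurableSpace G] [Group H] [Finite H] {φ : G →* H}

theorem measurableSet_commute_preimage (hφ : ∀ h, MeasurableSet (φ ⁻¹' {h})) :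
    MeasurableSet {w : G × G | Commute (φ w.1) (φ w.2)} := by
  have : {w : G × G | Commute (φ w.1) (φ w.2)} =
      ⋃ q ∈ {q : H × H | Commute q.1 q.2}, (φ ⁻¹' {q.1}) ×ˢ (φ ⁻¹' {q.2}) := by
    ext; simp
  rw [this]
  exact (Set.toFinite _).measurableSet_biUnion fun q _ => (hφ q.1).prod (hφ q.2)

variable [MeasurableMul G] (μ : Measure G) [μ.IsMulLeftInvariant] [IsProbabilityMeasure μ]

theorem measure_preimage_singleton_eq_inv_card (hsurj : Surjective φ)
    (hφ : ∀ h, MeasurableSet (φ ⁻¹' {h})) (h : H) : μ (φ ⁻¹' {h}) = (Nat.card H : ENNReal)⁻¹ := by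
  have := Fintype.ofFinite H
  have htrans : ∀ h, μ (φ ⁻¹' {h}) = μ (φ ⁻¹' {1}) := by
    intro h
    obtain ⟨x, rfl⟩ := hsurj h
    rw [← measure_preimage_mul μ x (φ ⁻¹' {φ x})]
    congr 1
    ext g
    simp
  have hsum : ∑ h : H, μ (φ ⁻¹' {h}) = 1 := by
    rw [sum_measure_preimage_singleton _ fun h _ => hφ h]
    simp
  rw [Finset.sum_congr rfl fun h _ => htrans h, Finset.sum_const, Finset.card_univ,
    nsmul_eq_mul] at hsum
  rw [htrans, Nat.card_eq_fintype_card]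
  exact ENNReal.eq_inv_of_mul_eq_one_left (by rwa [mul_comm])

theorem measureReal_prod_commute_preimage (hsurj : Surjective φ)
    (hφ : ∀ h, MeasurableSet (φ ⁻¹' {h})) :
    (μ.prod μ).real {w : G × G | Commute (φ w.1) (φ w.2)} =
      Nat.card (ConjClasses H) / Nat.card H := by
  classical
  have := Fintype.ofFinite H
  let C := Finset.univ.filter fun q : H × H => Commute q.1 q.2
  have hC : (C.card : ℝ) = Nat.card (ConjClasses H) * Nat.card H := by
    rw [← Nat.cast_mul, ← card_comm_eq_card_conjClasses_mul_card, Nat.card_eq_fintype_card,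
      Fintype.card_subtype]
  have hfiber : ∀ q : H × H, Prod.map φ φ ⁻¹' {q} = (φ ⁻¹' {q.1}) ×ˢ (φ ⁻¹' {q.2}) := by
    intro q
    rw [← Set.preimage_prod_map_prod, Set.singleton_prod_singleton]
  have hfiber_real : ∀ q : H × H,
      (μ.prod μ).real (Prod.map φ φ ⁻¹' {q}) = (Nat.card H : ℝ)⁻¹ ^ 2 := by
    intro q
    rw [hfiber, measureReal_prod_prod, sq]
    simp only [measureReal_def, measure_preimage_singleton_eq_inv_card μ hsurj hφ,
      ENNReal.toReal_inv, ENNReal.toReal_natCast]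
  have : {w : G × G | Commute (φ w.1) (φ w.2)} = Prod.map φ φ ⁻¹' C := by
    ext; simp [C]
  rw [this, ← sum_measureReal_preimage_singleton C fun q _ => hfiber q ▸ (hφ q.1).prod (hφ q.2)]
  simp only [hfiber_real, Finset.sum_const, nsmul_eq_mul, hC]
  have : (Nat.card H : ℝ) ≠ 0 := Nat.cast_ne_zero.mpr Nat.card_pos.ne'
  field_simp

end MonoidHom

namespace Matrix

variable {ι κ R : Type*}

noncomputable def supNorm [Norm R] (A : Matrix ι κ R) : ℝ := ⨆ i, ⨆ j, ‖A i j‖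

variable [Finite ι] [Finite κ]

theorem supNorm_le_iff [Norm R] {A : Matrix ι κ R} {r : ℝ} (hr : 0 ≤ r) :
    A.supNorm ≤ r ↔ ∀ i j, ‖A i j‖ ≤ r :=
  ⟨fun h i j => (le_ciSup (Set.finite_range _).bddAbove j).trans <|
      (le_ciSup (Set.finite_range (fun i => ⨆ j, ‖A i j‖)).bddAbove i).trans h,
    fun h => Real.iSup_le (fun i => Real.iSup_le (h i) hr) hr⟩

theorem exists_supNorm_eq_norm [SeminormedAddGroup R] (A : Matrix ι κ R) :
    ∃ x : R, A.supNorm = ‖x‖ := by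
  rcases isEmpty_or_nonempty ι with hι | hι
  · exact ⟨0, by simp [supNorm]⟩
  rcases isEmpty_or_nonempty κ with hκ | hκ
  · exact ⟨0, by simp [supNorm]⟩
  obtain ⟨i, hi⟩ := exists_eq_ciSup_of_finite (f := fun i => ⨆ j, ‖A i j‖)
  obtain ⟨j, hj⟩ := exists_eq_ciSup_of_finite (f := fun j => ‖A i j‖)
  exact ⟨A i j, by rw [supNorm, ← hi, ← hj]⟩

end Matrix

theorem PadicInt.norm_rpow_eq_tsum_indicator {p : ℕ} [Fact p.Prime] (z : ℤ_[p]) {σ : ℝ}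
    (hσ : 0 < σ) :
    ‖z‖ ^ σ = ∑' m : ℕ,
      (Set.Ioc ((p : ℝ) ^ (-((m + 1 : ℕ) : ℤ))) ((p : ℝ) ^ (-(m : ℤ)))).indicator
        (fun _ => ((p : ℝ) ^ (-σ)) ^ m) ‖z‖ := by
  have hp : (1 : ℝ) < p := by exact_mod_cast (Fact.out : p.Prime).one_lt
  have hpos : ∀ k : ℤ, (0 : ℝ) < (p : ℝ) ^ k := fun k => zpow_pos (by positivity) k
  rcases eq_or_ne z 0 with rfl | hz
  · rw [norm_zero, Real.zero_rpow hσ.ne', eq_comm]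
    exact (tsum_congr fun m => Set.indicator_of_notMem (fun h => (hpos _).not_gt h.1) _).trans
      tsum_zero
  rw [norm_eq_zpow_neg_valuation hz, tsum_eq_single z.valuation]
  · have hmem : (p : ℝ) ^ (-(z.valuation : ℤ)) ∈
        Set.Ioc ((p : ℝ) ^ (-((z.valuation + 1 : ℕ) : ℤ))) ((p : ℝ) ^ (-(z.valuation : ℤ))) :=
      ⟨zpow_lt_zpow_right₀ hp (by omega), le_rfl⟩
    rw [Set.indicator_of_mem hmem, ← Real.rpow_intCast, ← Real.rpow_mul (by positivity),
      ← Real.rpow_mul_natCast (by positivity)]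
    congr 1
    push_cast
    ring
  · intro m hm
    refine Set.indicator_of_notMem (fun h => hm ?_) _
    have h1 := (zpow_lt_zpow_iff_right₀ hp).mp h.1
    have h2 := (zpow_le_zpow_iff_right₀ hp).mp h.2
    omega

theorem integral_tsum_indicator_sdiff {X : Type*} [MeasurableSpace X] (ν : Measure X)
    [IsFiniteMeasure ν] {S : ℕ → Set X} (hS : Antitone S) (hSm : ∀ m, MeasurableSet (S m))
    {u : ℝ} (hu0 : 0 ≤ u) (hu1 : u < 1) :
    ∫ x, ∑' m, (S m \ S (m + 1)).indicator (fun _ => u ^ m) x ∂ν =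
      ∑' m, u ^ m * (ν.real (S m) - ν.real (S (m + 1))) := by
  have hD : ∀ m, MeasurableSet (S m \ S (m + 1)) := fun m => (hSm m).diff (hSm (m + 1))
  have hint : ∀ m, ∫ x, (S m \ S (m + 1)).indicator (fun _ => u ^ m) x ∂ν =
      u ^ m * ν.real (S m \ S (m + 1)) := fun m => by
    rw [integral_indicator_const _ (hD m), smul_eq_mul, mul_comm]
  have hnorm : ∀ m, (fun x => ‖(S m \ S (m + 1)).indicator (fun _ => u ^ m) x‖) =
      (S m \ S (m + 1)).indicator (fun _ => u ^ m) := fun m => by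
    ext x
    rw [norm_indicator_eq_indicator_norm, Real.norm_of_nonneg (pow_nonneg hu0 m)]
  rw [← integral_tsum_of_summable_integral_norm]
  · exact tsum_congr fun m => by rw [hint, measureReal_sdiff (hS m.le_succ) (hSm _)]
  · exact fun m => (integrable_const _).indicator (hD m)
  · simp only [hnorm, hint]
    refine .of_nonneg_of_le (fun m => by positivity) (fun m => ?_)
      ((summable_geometric_of_lt_one hu0 hu1).mul_right (ν.real Set.univ))
    exact mul_le_mul_of_nonneg_left (measureReal_mono (Set.subset_univ _)) (pow_nonneg hu0 m)

theorem summable_and_tsum_sub_one_eq {u k : ℝ} {F g : ℕ → ℝ} (hu0 : u ≠ 0) (hu1 : u ≠ 1)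
    (hF : Summable fun m => u ^ m * F m) (hF0 : F 0 = 1) (hg0 : g 0 = 1)
    (hg : ∀ m, g (m + 1) = k * u ^ (m + 1) * F (m + 1)) :
    Summable g ∧ ∑' m, g m - 1 = k * (∑' m, u ^ m * (F m - F (m + 1)) - 1) / (1 - u⁻¹) := by
  have hT : Summable fun m => u ^ (m + 1) * F (m + 1) := (summable_nat_add_iff 1).mpr hF
  have hg' : Summable fun m => g (m + 1) := by simpa only [hg, mul_assoc] using hT.mul_left k
  have hg_sum : Summable g := (summable_nat_add_iff 1).mp hg'
  have hshift : ∀ m, u ^ m * F (m + 1) = u⁻¹ * (u ^ (m + 1) * F (m + 1)) := fun m => by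
    rw [pow_succ]; field_simp
  have hF' : Summable fun m => u ^ m * F (m + 1) := by
    simpa only [hshift] using hT.mul_left u⁻¹
  have htsum_g : ∑' m, g m = 1 + k * ∑' m, u ^ (m + 1) * F (m + 1) := by
    rw [hg_sum.tsum_eq_zero_add, hg0, ← tsum_mul_left]
    simp only [hg, mul_assoc]
  have htsum_F : ∑' m, u ^ m * (F m - F (m + 1)) =
      1 + (1 - u⁻¹) * ∑' m, u ^ (m + 1) * F (m + 1) := by
    simp_rw [mul_sub]
    rw [hF.tsum_sub hF', hF.tsum_eq_zero_add, hF0]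
    simp only [hshift, tsum_mul_left]
    ring
  have hu1' : 1 - u⁻¹ ≠ 0 := sub_ne_zero.mpr (by simpa [eq_comm] using hu1)
  refine ⟨hg_sum, ?_⟩
  rw [htsum_g, htsum_F]
  field_simp
  ring

section CommutatorSublevel

open Matrix (GeneralLinearGroup)

variable (p : ℕ) [Fact p.Prime] (ι : Type*) [Fintype ι] [DecidableEq ι]

def commutatorSublevel (m : ℕ) : Set (GL ι ℤ_[p] × GL ι ℤ_[p]) :=
  {w | Matrix.supNorm (w.1 * w.2 - w.2 * w.1 : Matrix ι ι ℤ_[p]) ≤ (p : ℝ) ^ (-(m : ℤ))}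

variable {p ι}

theorem commutatorSublevel_eq (m : ℕ) :
    commutatorSublevel p ι m = {w | Commute (GeneralLinearGroup.map (PadicInt.toZModPow m) w.1)
      (GeneralLinearGroup.map (PadicInt.toZModPow m) w.2)} := by
  ext w
  simp only [commutatorSublevel, Set.mem_ofPred_eq]
  rw [Matrix.supNorm_le_iff (zpow_pos (by exact_mod_cast (Fact.out : p.Prime).pos) _).le]
  simp only [PadicInt.norm_le_pow_iff_toZModPow_eq_zero]
  rw [commute_iff_eq, ← map_mul, ← map_mul, Units.ext_iff, ← Matrix.ext_iff]
  simp only [GeneralLinearGroup.map_apply, Matrix.sub_apply, map_sub, sub_eq_zero, Units.val_mul]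

theorem measurableSet_map_toZModPow_preimage_singleton (m : ℕ) (a : GL ι (ZMod (p ^ m))) :
    MeasurableSet (GeneralLinearGroup.map (PadicInt.toZModPow m) ⁻¹' {a}) := by
  have : GeneralLinearGroup.map (PadicInt.toZModPow m) ⁻¹' {a} = ⋂ i, ⋂ j,
      (fun g : GL ι ℤ_[p] => (g : Matrix ι ι ℤ_[p]) i j) ⁻¹'
        (PadicInt.toZModPow m ⁻¹' {a i j}) := by
    ext g
    simp [Units.ext_iff, ← Matrix.ext_iff]
  rw [this]
  exact .iInter fun i => .iInter fun j =>
    ((Matrix.measurable_apply i j).comp (comap_measurable _))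
      (PadicInt.measurableSet_toZModPow_preimage_singleton m _)

theorem commutatorSublevel_zero : commutatorSublevel p ι 0 = Set.univ := by
  ext w
  simp only [commutatorSublevel, Set.mem_ofPred_eq, Set.mem_univ, iff_true, Nat.cast_zero,
    neg_zero, zpow_zero]
  exact (Matrix.supNorm_le_iff zero_le_one).mpr fun i j => PadicInt.norm_le_one _

theorem commutatorSublevel_antitone : Antitone (commutatorSublevel p ι) := by
  intro m n hmn w hw
  have hp : (1 : ℝ) ≤ p := by exact_mod_cast (Fact.out : p.Prime).one_lt.le
  exact hw.trans (zpow_le_zpow_right₀ hp (neg_le_neg (by exact_mod_cast hmn)))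

theorem measurableSet_commutatorSublevel (m : ℕ) : MeasurableSet (commutatorSublevel p ι m) := by
  rw [commutatorSublevel_eq]
  exact MonoidHom.measurableSet_commute_preimage (measurableSet_map_toZModPow_preimage_singleton m)

theorem measureReal_commutatorSublevel (μ : Measure (GL ι ℤ_[p])) [μ.IsMulLeftInvariant]
    [IsProbabilityMeasure μ] {m : ℕ} (hm : m ≠ 0) :
    (μ.prod μ).real (commutatorSublevel p ι m) =
      Nat.card (ConjClasses (GL ι (ZMod (p ^ m)))) / Nat.card (GL ι (ZMod (p ^ m))) := by
  have := PadicInt.isLocalHom_toZModPow (p := p) hm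
  rw [commutatorSublevel_eq]
  exact MonoidHom.measureReal_prod_commute_preimage μ
    (GeneralLinearGroup.map_surjective (PadicInt.toZModPow_surjective m))
    (measurableSet_map_toZModPow_preimage_singleton m)

theorem integral_supNorm_commutator_rpow (ν : Measure (GL ι ℤ_[p] × GL ι ℤ_[p]))
    [IsFiniteMeasure ν] {σ : ℝ} (hσ : 0 < σ) :
    ∫ w, Matrix.supNorm (w.1 * w.2 - w.2 * w.1 : Matrix ι ι ℤ_[p]) ^ σ ∂ν =
      ∑' m, ((p : ℝ) ^ (-σ)) ^ m *
        (ν.real (commutatorSublevel p ι m) - ν.real (commutatorSublevel p ι (m + 1))) := by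
  have hp : (1 : ℝ) < p := by exact_mod_cast (Fact.out : p.Prime).one_lt
  have hlayers : ∀ w : GL ι ℤ_[p] × GL ι ℤ_[p],
      Matrix.supNorm (w.1 * w.2 - w.2 * w.1 : Matrix ι ι ℤ_[p]) ^ σ = ∑' m,
        (commutatorSublevel p ι m \ commutatorSublevel p ι (m + 1)).indicator
          (fun _ => ((p : ℝ) ^ (-σ)) ^ m) w := by
    intro w
    obtain ⟨z, hz⟩ := Matrix.exists_supNorm_eq_norm (w.1 * w.2 - w.2 * w.1 : Matrix ι ι ℤ_[p])
    rw [hz, PadicInt.norm_rpow_eq_tsum_indicator z hσ]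
    simp only [Set.indicator, commutatorSublevel, Set.mem_sdiff, Set.mem_ofPred_eq, Set.mem_Ioc,
      hz, not_le, and_comm]
  simp only [hlayers]
  exact integral_tsum_indicator_sdiff ν commutatorSublevel_antitone
    measurableSet_commutatorSublevel (Real.rpow_nonneg (by positivity) _)
    (Real.rpow_lt_one_of_one_lt_of_neg hp (neg_lt_zero.mpr hσ))

theorem card_conjClasses_mul_rpow (μ : Measure (GL ι ℤ_[p])) [μ.IsMulLeftInvariant]
    [IsProbabilityMeasure μ] {d : ℕ} (hd : d = Fintype.card ι ^ 2) (s : ℝ) (m : ℕ) :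
    (Nat.card (ConjClasses (GL ι (ZMod (p ^ (m + 1))))) : ℝ) *
        (p : ℝ) ^ (-(((m + 1 : ℕ) : ℝ) * s)) =
      (Nat.card (GL ι (ZMod p)) / (p : ℝ) ^ d) * ((p : ℝ) ^ (-(s - d))) ^ (m + 1) *
        (μ.prod μ).real (commutatorSublevel p ι (m + 1)) := by
  have hp : (0 : ℝ) < p := by exact_mod_cast (Fact.out : p.Prime).pos
  have hpow : ((p : ℝ) ^ (-(s - d))) ^ (m + 1) =
      (p : ℝ) ^ (-(((m + 1 : ℕ) : ℝ) * s)) * ((p : ℝ) ^ d * (p : ℝ) ^ (m * d)) := by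
    rw [← Real.rpow_mul_natCast hp.le, ← Real.rpow_natCast, ← Real.rpow_natCast,
      ← Real.rpow_add hp, ← Real.rpow_add hp]
    congr 1
    push_cast
    ring
  have hcard : (Nat.card (GL ι (ZMod p)) : ℝ) ≠ 0 := Nat.cast_ne_zero.mpr Nat.card_pos.ne'
  rw [measureReal_commutatorSublevel μ m.succ_ne_zero,
    GeneralLinearGroup.card_zmod_prime_pow_succ, ← hd, hpow]
  push_cast
  field_simp

end CommutatorSublevel

theorem GL_padic_conjugacy_zeta_general (p n : ℕ) [Fact p.Prime]
    (d : ℕ) (hd : d = n ^ 2)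
    (μ : Measure (Matrix.GeneralLinearGroup (Fin n) (PadicInt p)))
    [μ.IsHaarMeasure] [IsProbabilityMeasure μ]
    (c : ℕ → ℕ)
    (hc : ∀ m, c m = Nat.card (ConjClasses (Matrix.GeneralLinearGroup (Fin n) (ZMod (p ^ m)))))
    (Z : ℝ → ℝ)
    (hZ : ∀ σ : ℝ, Z σ =
      ∫ w : Matrix.GeneralLinearGroup (Fin n) (PadicInt p) ×
            Matrix.GeneralLinearGroup (Fin n) (PadicInt p),
        (⨆ i : Fin n, ⨆ j : Fin n,
          ‖((w.1 : Matrix (Fin n) (Fin n) (PadicInt p)) * (w.2 : Matrix (Fin n) (Fin n) (PadicInt p)) -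
            (w.2 : Matrix (Fin n) (Fin n) (PadicInt p)) * (w.1 : Matrix (Fin n) (Fin n) (PadicInt p))) i j‖) ^ σ
        ∂(μ.prod μ))
    (k : ℝ)
    (hk : k = (Nat.card (Matrix.GeneralLinearGroup (Fin n) (ZMod p)) : ℝ) / (p : ℝ) ^ d)
    (s : ℝ) (hs : (d : ℝ) < s) :
    Summable (fun m : ℕ => (c m : ℝ) * (p : ℝ) ^ (-(m * s))) ∧
    (∑' m : ℕ, (c m : ℝ) * (p : ℝ) ^ (-(m * s))) - 1 =
      k * (Z (s - d) - 1) / (1 - (p : ℝ) ^ (s - (d : ℝ))) := by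
  have hp : (1 : ℝ) < p := by exact_mod_cast (Fact.out : p.Prime).one_lt
  set u := (p : ℝ) ^ (-(s - d)) with hu
  set F := fun m => (μ.prod μ).real (commutatorSublevel p (Fin n) m)
  have hu0 : 0 < u := Real.rpow_pos_of_pos (by positivity) _
  have hu1 : u < 1 := Real.rpow_lt_one_of_one_lt_of_neg hp (by linarith)
  have hF : Summable fun m => u ^ m * F m :=
    .of_nonneg_of_le (fun m => by positivity)
      (fun m => mul_le_of_le_one_right (pow_nonneg hu0.le m) measureReal_le_one)
      (summable_geometric_of_lt_one hu0.le hu1)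
  have hF0 : F 0 = 1 := by simp [F, commutatorSublevel_zero]
  have hc0 : (c 0 : ℝ) * (p : ℝ) ^ (-((0 : ℕ) * s)) = 1 := by
    have := (ConjClasses.mk_surjective (α := GL (Fin n) (ZMod 1))).subsingleton
    rw [hc, pow_zero, Nat.card_of_subsingleton (ConjClasses.mk 1)]
    simp
  have hcF (m : ℕ) : (c (m + 1) : ℝ) * (p : ℝ) ^ (-(((m + 1 : ℕ) : ℝ) * s)) =
      k * u ^ (m + 1) * F (m + 1) := by
    rw [hc, hk]
    exact card_conjClasses_mul_rpow μ (by simp [hd]) s m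
  have hZF : Z (s - d) = ∑' m, u ^ m * (F m - F (m + 1)) := by
    rw [hZ]
    exact integral_supNorm_commutator_rpow _ (by linarith)
  obtain ⟨hsum, htsum⟩ := summable_and_tsum_sub_one_eq
    (g := fun m : ℕ => (c m : ℝ) * (p : ℝ) ^ (-(m * s))) hu0.ne' hu1.ne hF hF0 hc0 hcF
  refine ⟨hsum, ?_⟩
  rw [htsum, hZF, hu, Real.rpow_neg p.cast_nonneg, inv_inv]

/-- The conjugacy class zeta function of `GLₙ(ℤ_p)` in terms of the commutator integral:
for `s > d = n²`, `∑ c_m p^{-ms} - 1 = k (Z(s-d) - 1)/(1 - p^{s-d})`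
where `k = |GLₙ(𝔽_p)|/p^d`. -/
theorem GL_padic_conjugacy_zeta (p n : ℕ) [Fact p.Prime] (hn : 1 ≤ n)
    (d : ℕ) (hd : d = n ^ 2)
    (μ : Measure (Matrix.GeneralLinearGroup (Fin n) (PadicInt p)))
    [μ.IsHaarMeasure] [IsProbabilityMeasure μ]
    (c : ℕ → ℕ)
    (hc : ∀ m, c m = Nat.card (ConjClasses (Matrix.GeneralLinearGroup (Fin n) (ZMod (p ^ m)))))
    (Z : ℝ → ℝ)
    (hZ : ∀ σ : ℝ, Z σ =
      ∫ w : Matrix.GeneralLinearGroup (Fin n) (PadicInt p) ×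
            Matrix.GeneralLinearGroup (Fin n) (PadicInt p),
        (⨆ i : Fin n, ⨆ j : Fin n,
          ‖((w.1 : Matrix (Fin n) (Fin n) (PadicInt p)) * (w.2 : Matrix (Fin n) (Fin n) (PadicInt p)) -
            (w.2 : Matrix (Fin n) (Fin n) (PadicInt p)) * (w.1 : Matrix (Fin n) (Fin n) (PadicInt p))) i j‖) ^ σ
        ∂(μ.prod μ))
    (k : ℝ)
    (hk : k = (Nat.card (Matrix.GeneralLinearGroup (Fin n) (ZMod p)) : ℝ) / (p : ℝ) ^ d)
    (s : ℝ) (hs : (d : ℝ) < s) :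
    Summable (fun m : ℕ => (c m : ℝ) * (p : ℝ) ^ (-(m * s))) ∧
    (∑' m : ℕ, (c m : ℝ) * (p : ℝ) ^ (-(m * s))) - 1 =
      k * (Z (s - d) - 1) / (1 - (p : ℝ) ^ (s - (d : ℝ))) :=
  GL_padic_conjugacy_zeta_general p n d hd μ c hc Z hZ k hk s hs
end
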